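/- Let G be Dodecahedron (the graph of the regular dodecahedron). Then G is a biladder on 20 vertices. -/

import Mathlib

open SimpleGraph

/-- A graph has a circuit if it contains a cycle. -/
def HasCircuit {V : Type} (G : SimpleGraph V) : Prop :=
  ∃ (v : V) (w : G.Walk v v), w.IsCycle

/-- `s` is the vertex set of a quadrangle (circuit of length four) of `G`. -/
def IsQuadSet {V : Type} (G : SimpleGraph V) (s : Set V) : Prop :=
  ∃ a b c d : V, s = {a, b, c, d} ∧ a ≠ b ∧ a ≠ c ∧ a ≠ d ∧ b ≠ c ∧ b ≠ d ∧ c ≠ d ∧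
    G.Adj a b ∧ G.Adj b c ∧ G.Adj c d ∧ G.Adj d a

def HasQuadrangle {V : Type} (G : SimpleGraph V) : Prop := ∃ s, IsQuadSet G s

def AtMostOneQuadrangle {V : Type} (G : SimpleGraph V) : Prop :=
  ∀ s t, IsQuadSet G s → IsQuadSet G t → s = t

/-- The edge cut `δA`: edges with one end in `A` and the other outside. -/
def cutEdges {V : Type} (G : SimpleGraph V) (A : Set V) : Set (Sym2 V) :=
  {e | ∃ a b, a ∈ A ∧ b ∉ A ∧ G.Adj a b ∧ e = s(a, b)}

/-- `G` is `k`-connected: more than `k` vertices and removing fewer than `k`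
vertices leaves a connected graph. -/
def IsKConnected {V : Type} [Fintype V] (G : SimpleGraph V) (k : ℕ) : Prop :=
  k < Fintype.card V ∧ ∀ S : Set V, S.ncard < k → (G.induce Sᶜ).Connected

/-- Every vertex has degree three. -/
def IsCubic {V : Type} (G : SimpleGraph V) : Prop :=
  ∀ v : V, (G.neighborSet v).ncard = 3

/-- Cyclically `k`-connected cubic graph: 3-connected, at least `2k` vertices, and
every edge-cut of cardinality less than `k` has a circuit-free side. -/
def CyclicallyKConnected {V : Type} [Fintype V] (G : SimpleGraph V) (k : ℕ) : Prop :=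
  IsKConnected G 3 ∧ 2 * k ≤ Fintype.card V ∧
    ∀ A : Set V, A.Nonempty → Aᶜ.Nonempty → (cutEdges G A).ncard < k →
      ¬ HasCircuit (G.induce A) ∨ ¬ HasCircuit (G.induce Aᶜ)

/-- The induced subgraph on `A` is (exactly) a quadrangle. -/
def IsQuadrangleGraphOn {V : Type} (G : SimpleGraph V) (A : Set V) : Prop :=
  ∃ a b c d : V, A = {a, b, c, d} ∧ a ≠ b ∧ a ≠ c ∧ a ≠ d ∧ b ≠ c ∧ b ≠ d ∧ c ≠ d ∧
    G.Adj a b ∧ G.Adj b c ∧ G.Adj c d ∧ G.Adj d a ∧ ¬ G.Adj a c ∧ ¬ G.Adj b d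

/-- Quad-connected cubic graph. -/
def QuadConnected {V : Type} [Fintype V] (G : SimpleGraph V) : Prop :=
  CyclicallyKConnected G 4 ∧ 10 ≤ Fintype.card V ∧
    ((∃ s t, IsQuadSet G s ∧ IsQuadSet G t ∧ s ≠ t) → 12 ≤ Fintype.card V) ∧
    ∀ A : Set V, A.Nonempty → Aᶜ.Nonempty → (cutEdges G A).ncard ≤ 4 →
      (¬ HasCircuit (G.induce A) ∨ IsQuadrangleGraphOn G A) ∨
      (¬ HasCircuit (G.induce Aᶜ) ∨ IsQuadrangleGraphOn G Aᶜ)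

/-- `G+(u,v,x,y)`: subdivide the edges `uv` and `xy` (new vertices `Sum.inr 0`
resp. `Sum.inr 1`) and join the two new vertices by an edge. -/
def onePlus {V : Type} (G : SimpleGraph V) (u v x y : V) : SimpleGraph (V ⊕ Fin 2) :=
  SimpleGraph.fromRel (fun a b =>
    match a, b with
    | Sum.inl a, Sum.inl b => G.Adj a b ∧ s(a, b) ≠ s(u, v) ∧ s(a, b) ≠ s(x, y)
    | Sum.inl a, Sum.inr i => (i = 0 ∧ (a = u ∨ a = v)) ∨ (i = 1 ∧ (a = x ∨ a = y))
    | Sum.inr _, Sum.inl _ => False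
    | Sum.inr i, Sum.inr j => i ≠ j)

/-- The data of a 1-extension `G+(u,v,x,y)`: `uv`, `xy` are edges and
`u,v,x,y` are pairwise distinct. -/
def OneExtData {V : Type} (G : SimpleGraph V) (u v x y : V) : Prop :=
  G.Adj u v ∧ G.Adj x y ∧ u ≠ x ∧ u ≠ y ∧ v ≠ x ∧ v ≠ y

/-- A long 1-extension: moreover neither `u` nor `v` is adjacent to `x` or `y`. -/
def LongOneExtData {V : Type} (G : SimpleGraph V) (u v x y : V) : Prop :=
  OneExtData G u v x y ∧ ¬ G.Adj u x ∧ ¬ G.Adj u y ∧ ¬ G.Adj v x ∧ ¬ G.Adj v y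

/-- A short 1-extension: a 1-extension that is not long. -/
def ShortOneExtData {V : Type} (G : SimpleGraph V) (u v x y : V) : Prop :=
  OneExtData G u v x y ∧ (G.Adj u x ∨ G.Adj u y ∨ G.Adj v x ∨ G.Adj v y)

/-- A homeomorphic embedding of `G` into `H`. -/
structure HomeoEmb {V W : Type} (G : SimpleGraph V) (H : SimpleGraph W) where
  vmap : V → W
  vinj : Function.Injective vmap
  emap : ∀ ⦃a b : V⦄, G.Adj a b → H.Walk (vmap a) (vmap b)
  emap_path : ∀ ⦃a b : V⦄ (h : G.Adj a b), (emap h).IsPath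
  emap_symm : ∀ ⦃a b : V⦄ (h : G.Adj a b), (emap h.symm).reverse = emap h
  internal : ∀ ⦃a b : V⦄ (h : G.Adj a b) (w : W), w ∈ (emap h).support →
      w ∈ Set.range vmap → w = vmap a ∨ w = vmap b
  edge_disjoint : ∀ ⦃a b c d : V⦄ (h₁ : G.Adj a b) (h₂ : G.Adj c d),
      s(a, b) ≠ s(c, d) → ∀ e, e ∈ (emap h₁).edges → e ∉ (emap h₂).edges
  meet_ends : ∀ ⦃a b c d : V⦄ (h₁ : G.Adj a b) (h₂ : G.Adj c d),
      s(a, b) ≠ s(c, d) → ∀ w, w ∈ (emap h₁).support → w ∈ (emap h₂).support →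
      (w = vmap a ∨ w = vmap b) ∧ (w = vmap c ∨ w = vmap d)

/-- Subdividing the edge `uv` of `G`: the new vertex is `Sum.inr ()`. -/
def subdivideEdge {V : Type} (G : SimpleGraph V) (u v : V) : SimpleGraph (V ⊕ Unit) :=
  SimpleGraph.fromRel (fun a b =>
    match a, b with
    | Sum.inl a, Sum.inl b => G.Adj a b ∧ s(a, b) ≠ s(u, v)
    | Sum.inl a, Sum.inr _ => a = u ∨ a = v
    | _, _ => False)

/-- `S` is obtained from `G` by repeatedly subdividing edges. -/
inductive IsSubdivision {V : Type} (G : SimpleGraph V) : {W : Type} → SimpleGraph W → Prop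
  | refl : IsSubdivision G G
  | step {W : Type} {S : SimpleGraph W} {u v : W} (h : S.Adj u v)
      (hS : IsSubdivision G S) : IsSubdivision G (subdivideEdge S u v)

/-- `H` topologically contains `G`: some graph obtained from `G` by repeatedly
subdividing edges is isomorphic to a subgraph of `H`. -/
def TopContains {W V : Type} (H : SimpleGraph W) (G : SimpleGraph V) : Prop :=
  ∃ (U : Type) (S : SimpleGraph U), IsSubdivision G S ∧
    ∃ f : U → W, Function.Injective f ∧ ∀ a b : U, S.Adj a b → H.Adj (f a) (f b)

/-- The biladder on `2p` vertices; `(false, i)` is `uᵢ` and `(true, i)` is `vᵢ`. -/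
def biladder (p : ℕ) : SimpleGraph (Bool × ZMod p) :=
  SimpleGraph.fromRel (fun a b =>
    (a.1 = false ∧ b.1 = false ∧ b.2 = a.2 + 1) ∨
    (a.1 = true ∧ b.1 = true ∧ b.2 = a.2 + 2) ∨
    (a.1 = false ∧ b.1 = true ∧ a.2 = b.2))

/-- The edges of the dodecahedron, the 1-skeleton of the regular dodecahedron:
outer pentagon 0–4, two middle rings 5–9 and 10–14, inner pentagon 15–19. -/
def dodecEdges : List (Fin 20 × Fin 20) :=
  [(0,1),(1,2),(2,3),(3,4),(4,0),
   (0,5),(1,6),(2,7),(3,8),(4,9),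
   (5,10),(5,14),(6,10),(6,11),(7,11),(7,12),(8,12),(8,13),(9,13),(9,14),
   (10,15),(11,16),(12,17),(13,18),(14,19),
   (15,16),(16,17),(17,18),(18,19),(19,15)]

/-- The dodecahedron graph. -/
def dodecahedron : SimpleGraph (Fin 20) :=
  SimpleGraph.fromRel (fun a b => (a, b) ∈ dodecEdges)

/-!
For `p = 10` the edges `vᵢvᵢ₊₂` of the biladder split the `v`'s into two pentagons, on the even and
on the odd indices, while the `u`'s form a `10`-cycle with a rung `uᵢvᵢ` at each vertex. The
dodecahedron has the same shape: its outer pentagon `0–4` and inner pentagon `15–19` are joined by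
spokes to the `10`-cycle `5, 10, 6, 11, …, 9, 14` through the middle rings; numbering that cycle
`u₀, …, u₉` and calling the spoke partner of `uᵢ` `vᵢ` gives the isomorphism.
-/

def dodecahedronEquivBiladder : Fin 20 ≃ Bool × ZMod 10 where
  toFun i := ([(true, 0), (true, 2), (true, 4), (true, 6), (true, 8),
    (false, 0), (false, 2), (false, 4), (false, 6), (false, 8),
    (false, 1), (false, 3), (false, 5), (false, 7), (false, 9),
    (true, 1), (true, 3), (true, 5), (true, 7), (true, 9)] : List (Bool × ZMod 10)).get i
  invFun x := if x.1 then
      ([0, 15, 1, 16, 2, 17, 3, 18, 4, 19] : List (Fin 20)).get x.2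
    else
      ([5, 10, 6, 11, 7, 12, 8, 13, 9, 14] : List (Fin 20)).get x.2
  left_inv := by decide
  right_inv := by decide

def dodecahedronIsoBiladder : dodecahedron ≃g biladder 10 where
  toEquiv := dodecahedronEquivBiladder
  map_rel_iff' := by
    unfold biladder dodecahedron
    decide

/-- the Dodecahedron is a biladder on 20 vertices. -/
theorem dodecahedron_iso_biladder_ten : Nonempty (dodecahedron ≃g biladder 10) :=
  ⟨dodecahedronIsoBiladder⟩
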